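/- Let a, b : ℝ → ℝ be continuous and let c : ℝ → ℍ² be a C¹ curve satisfying c'(v) = a(v)·(j·c(v)) + b(v)·(k·c(v)) for all v. Then for all v ∈ ℝ the vector c(v) lies in the real linear span of the four vectors c(0), i·c(0), j·c(0), k·c(0). (This is the key step showing that for a Codazzi totally real surface the lift satisfies F(u,v) ∈ ℍ(u) = span{γ(u), iγ(u), jγ(u), kγ(u)} for each fixed u.) -/

import Mathlib

open scoped Quaternion

/-- `ℍ² ≅ ℝ⁸`. -/
abbrev H2 := PiLp 2 (fun _ : Fin 2 => ℍ[ℝ])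

/-- The quaternion imaginary unit `i`. -/
def qi : ℍ[ℝ] := ⟨0, 1, 0, 0⟩
/-- The quaternion imaginary unit `j`. -/
def qj : ℍ[ℝ] := ⟨0, 0, 1, 0⟩
/-- The quaternion imaginary unit `k`. -/
def qk : ℍ[ℝ] := ⟨0, 0, 0, 1⟩

/-- Componentwise left multiplication of a vector of `ℍ²` by a quaternion. -/
noncomputable def qmul (q : ℍ[ℝ]) (x : H2) : H2 := WithLp.toLp 2 (fun n => q * x n)

open scoped RealInnerProductSpace

section aux

lemma qmul_add (q : ℍ[ℝ]) (x y : H2) : qmul q (x + y) = qmul q x + qmul q y := by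
  refine PiLp.ext fun n => ?_; simp [qmul, mul_add]

lemma qmul_smul (q : ℍ[ℝ]) (r : ℝ) (x : H2) : qmul q (r • x) = r • qmul q x := by
  refine PiLp.ext fun n => ?_
  show q * (r • x) n = (r • qmul q x) n
  show q * (r • x n) = r • (q * x n)
  rw [mul_smul_comm]

lemma qmul_neg (q : ℍ[ℝ]) (x : H2) : qmul q (-x) = -qmul q x := by
  refine PiLp.ext fun n => ?_; simp [qmul]

lemma qmul_zero' (q : ℍ[ℝ]) : qmul q (0 : H2) = 0 :=
  PiLp.ext fun n => mul_zero q

lemma qmul_qmul (p q : ℍ[ℝ]) (x : H2) : qmul p (qmul q x) = qmul (p * q) x := by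
  refine PiLp.ext fun n => ?_; simp [qmul, mul_assoc]

lemma qmul_neg1 (x : H2) : qmul (-1 : ℍ[ℝ]) x = -x := by
  refine PiLp.ext fun n => ?_; simp [qmul]

lemma qmul_negq (q : ℍ[ℝ]) (x : H2) : qmul (-q) x = -qmul q x := by
  refine PiLp.ext fun n => ?_; simp [qmul]

/-- `qmul q` as a continuous linear map. -/
noncomputable def qmulL (q : ℍ[ℝ]) : H2 →L[ℝ] H2 :=
  LinearMap.toContinuousLinearMap
    { toFun := qmul q
      map_add' := qmul_add q
      map_smul' := fun r x => qmul_smul q r x }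

@[simp] lemma qmulL_apply (q : ℍ[ℝ]) (x : H2) : qmulL q x = qmul q x := rfl

lemma re_comm (a b : ℍ[ℝ]) : (a * b).re = (b * a).re := by
  simp [Quaternion.re_mul]; ring

lemma inner_qmul_left (q a b : ℍ[ℝ]) : ⟪q * a, b⟫ = ⟪a, star q * b⟫ := by
  simp only [Quaternion.inner_def, star_mul, star_star, ← mul_assoc]
  rw [re_comm (a * star b) q, ← mul_assoc]

lemma inner_qmul_left' (q : ℍ[ℝ]) (x y : H2) : ⟪qmul q x, y⟫ = ⟪x, qmul (star q) y⟫ := by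
  rw [PiLp.inner_apply, PiLp.inner_apply]
  exact Finset.sum_congr rfl fun n _ => inner_qmul_left q (x n) (y n)

lemma norm_qmul (q : ℍ[ℝ]) (x : H2) : ‖qmul q x‖ = ‖q‖ * ‖x‖ := by
  rw [PiLp.norm_eq_of_L2, PiLp.norm_eq_of_L2]
  rw [← Real.sqrt_sq (norm_nonneg q), ← Real.sqrt_mul (by positivity)]
  congr 1
  rw [Finset.mul_sum]
  exact Finset.sum_congr rfl fun n _ => by
    rw [show (qmul q x) n = q * x n from rfl, norm_mul]; ring

lemma norm_qj : ‖qj‖ = 1 := by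
  have : Quaternion.normSq qj = 1 := by rw [Quaternion.normSq_def']; simp [qj]
  nlinarith [Quaternion.normSq_eq_norm_mul_self qj, norm_nonneg qj]

lemma norm_qk : ‖qk‖ = 1 := by
  have : Quaternion.normSq qk = 1 := by rw [Quaternion.normSq_def']; simp [qk]
  nlinarith [Quaternion.normSq_eq_norm_mul_self qk, norm_nonneg qk]

lemma star_qj : star qj = -qj := by ext <;> simp only [Quaternion.re_star, Quaternion.imI_star, Quaternion.imJ_star, Quaternion.imK_star, Quaternion.re_neg, Quaternion.imI_neg, Quaternion.imJ_neg, Quaternion.imK_neg] <;> simp [qj]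
lemma star_qk : star qk = -qk := by ext <;> simp only [Quaternion.re_star, Quaternion.imI_star, Quaternion.imJ_star, Quaternion.imK_star, Quaternion.re_neg, Quaternion.imI_neg, Quaternion.imJ_neg, Quaternion.imK_neg] <;> simp [qk]

end aux

/-- Let `a, b : ℝ → ℝ` be continuous and let `c : ℝ → ℍ²` be a `C¹`
curve satisfying `c' v = a v • (j • c v) + b v • (k • c v)` for all `v`.  Then for
all `v` the vector `c v` lies in the real linear span of the four vectors
`c 0`, `i • c 0`, `j • c 0`, `k • c 0`. -/
theorem stmt_17 (a b : ℝ → ℝ) (ha : Continuous a) (hb : Continuous b)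
    (c : ℝ → H2) (hc : ContDiff ℝ 1 c)
    (hode : ∀ v, deriv c v = a v • qmul qj (c v) + b v • qmul qk (c v)) (v : ℝ) :
    c v ∈ Submodule.span ℝ
      ({c 0, qmul qi (c 0), qmul qj (c 0), qmul qk (c 0)} : Set H2) := by
  classical
  set S : Submodule ℝ H2 :=
    Submodule.span ℝ ({c 0, qmul qi (c 0), qmul qj (c 0), qmul qk (c 0)} : Set H2) with hS
  -- generators are in S
  have hg0 : c 0 ∈ S := Submodule.subset_span (by simp)
  have hgi : qmul qi (c 0) ∈ S := Submodule.subset_span (by simp)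
  have hgj : qmul qj (c 0) ∈ S := Submodule.subset_span (by simp)
  have hgk : qmul qk (c 0) ∈ S := Submodule.subset_span (by simp)
  -- multiplication tables
  have hji : qj * qi = -qk := by ext <;> simp only [Quaternion.re_mul, Quaternion.imI_mul, Quaternion.imJ_mul, Quaternion.imK_mul, Quaternion.re_neg, Quaternion.imI_neg, Quaternion.imJ_neg, Quaternion.imK_neg, Quaternion.re_one, Quaternion.imI_one, Quaternion.imJ_one, Quaternion.imK_one] <;> simp [qi, qj, qk]
  have hjj : qj * qj = -1 := by ext <;> simp only [Quaternion.re_mul, Quaternion.imI_mul, Quaternion.imJ_mul, Quaternion.imK_mul, Quaternion.re_neg, Quaternion.imI_neg, Quaternion.imJ_neg, Quaternion.imK_neg, Quaternion.re_one, Quaternion.imI_one, Quaternion.imJ_one, Quaternion.imK_one] <;> simp [qj]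
  have hjk : qj * qk = qi := by ext <;> simp only [Quaternion.re_mul, Quaternion.imI_mul, Quaternion.imJ_mul, Quaternion.imK_mul, Quaternion.re_neg, Quaternion.imI_neg, Quaternion.imJ_neg, Quaternion.imK_neg, Quaternion.re_one, Quaternion.imI_one, Quaternion.imJ_one, Quaternion.imK_one] <;> simp [qi, qj, qk]
  have hki : qk * qi = qj := by ext <;> simp only [Quaternion.re_mul, Quaternion.imI_mul, Quaternion.imJ_mul, Quaternion.imK_mul, Quaternion.re_neg, Quaternion.imI_neg, Quaternion.imJ_neg, Quaternion.imK_neg, Quaternion.re_one, Quaternion.imI_one, Quaternion.imJ_one, Quaternion.imK_one] <;> simp [qi, qj, qk]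
  have hkj : qk * qj = -qi := by ext <;> simp only [Quaternion.re_mul, Quaternion.imI_mul, Quaternion.imJ_mul, Quaternion.imK_mul, Quaternion.re_neg, Quaternion.imI_neg, Quaternion.imJ_neg, Quaternion.imK_neg, Quaternion.re_one, Quaternion.imI_one, Quaternion.imJ_one, Quaternion.imK_one] <;> simp [qi, qj, qk]
  have hkk : qk * qk = -1 := by ext <;> simp only [Quaternion.re_mul, Quaternion.imI_mul, Quaternion.imJ_mul, Quaternion.imK_mul, Quaternion.re_neg, Quaternion.imI_neg, Quaternion.imJ_neg, Quaternion.imK_neg, Quaternion.re_one, Quaternion.imI_one, Quaternion.imJ_one, Quaternion.imK_one] <;> simp [qk]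
  -- S is invariant under qmul qj, qmul qk
  have hinv : ∀ q : ℍ[ℝ], q = qj ∨ q = qk → ∀ x ∈ S, qmul q x ∈ S := by
    intro q hq x hx
    induction hx using Submodule.span_induction with
    | mem y hy =>
      simp only [Set.mem_insert_iff, Set.mem_singleton_iff] at hy
      rcases hq with rfl | rfl
      · rcases hy with rfl | rfl | rfl | rfl
        · exact hgj
        · rw [qmul_qmul, hji, qmul_negq]; exact S.neg_mem hgk
        · rw [qmul_qmul, hjj, qmul_neg1]; exact S.neg_mem hg0
        · rw [qmul_qmul, hjk]; exact hgi
      · rcases hy with rfl | rfl | rfl | rfl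
        · exact hgk
        · rw [qmul_qmul, hki]; exact hgj
        · rw [qmul_qmul, hkj, qmul_negq]; exact S.neg_mem hgi
        · rw [qmul_qmul, hkk, qmul_neg1]; exact S.neg_mem hg0
    | zero => rw [qmul_zero']; exact S.zero_mem
    | add y z _ _ hy hz => rw [qmul_add]; exact S.add_mem hy hz
    | smul r y _ hy => rw [qmul_smul]; exact S.smul_mem r hy
  -- Sᗮ is invariant under qmul qj, qmul qk
  have hinvT : ∀ q : ℍ[ℝ], q = qj ∨ q = qk → ∀ x ∈ Sᗮ, qmul q x ∈ Sᗮ := by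
    intro q hq x hx
    rw [Submodule.mem_orthogonal]
    intro u hu
    rw [real_inner_comm, inner_qmul_left']
    have hstar : star q = -q := by rcases hq with rfl | rfl; exact star_qj; exact star_qk
    rw [hstar, qmul_negq, inner_neg_right]
    have := (Submodule.mem_orthogonal S x).mp hx (qmul q u) (hinv q hq u hu)
    rw [real_inner_comm] at this
    rw [this, neg_zero]
  -- the orthogonal projection onto T = Sᗮ
  set T : Submodule ℝ H2 := Sᗮ with hT
  set P : H2 →L[ℝ] H2 := T.subtypeL.comp (T.orthogonalProjectionOnto) with hP
  have hPdef : ∀ x : H2, P x = (↑(T.orthogonalProjectionOnto x) : H2) := fun x => rfl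
  have hPS : ∀ x ∈ S, P x = 0 := by
    intro x hx
    have hx' : x ∈ Tᗮ := (Submodule.le_orthogonal_orthogonal S) hx
    rw [hPdef, Submodule.orthogonalProjectionOnto_apply_of_mem_orthogonal hx']
    rfl
  have hPT : ∀ x ∈ T, P x = x := by
    intro x hx
    have h1 : T.orthogonalProjectionOnto x = ⟨x, hx⟩ :=
      Submodule.orthogonalProjectionOnto_mem_subspace_eq_self (K := T) ⟨x, hx⟩
    rw [hPdef, h1]
  have hPcomm : ∀ q : ℍ[ℝ], q = qj ∨ q = qk → ∀ x : H2, P (qmul q x) = qmul q (P x) := by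
    intro q hq x
    have hdecomp : (↑(S.orthogonalProjectionOnto x) : H2) + ↑(Sᗮ.orthogonalProjectionOnto x) = x :=
      Submodule.starProjection_add_starProjection_orthogonal (K := S) x
    set s : H2 := (↑(S.orthogonalProjectionOnto x) : H2) with hs
    set t : H2 := (↑(Sᗮ.orthogonalProjectionOnto x) : H2) with ht
    have hsS : s ∈ S := (S.orthogonalProjectionOnto x).2
    have htT : t ∈ T := (Sᗮ.orthogonalProjectionOnto x).2
    have hPx : P x = t := by
      conv_lhs => rw [← hdecomp]
      rw [map_add, hPS s hsS, hPT t htT, zero_add]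
    have hq1 : P (qmul q x) = qmul q t := by
      conv_lhs => rw [← hdecomp]
      rw [qmul_add, map_add, hPS _ (hinv q hq s hsS), hPT _ (hinvT q hq t htT), zero_add]
    rw [hq1, hPx]
  -- the projected curve
  set y : ℝ → H2 := fun t => P (c t) with hy
  have hy0 : y 0 = 0 := hPS _ hg0
  have hcd : ∀ t, HasDerivAt c (deriv c t) t :=
    fun t => (hc.differentiable one_ne_zero t).hasDerivAt
  have hyd : ∀ t, HasDerivAt y (a t • qmul qj (y t) + b t • qmul qk (y t)) t := by
    intro t
    have h1 : HasDerivAt y (P (deriv c t)) t := P.hasFDerivAt.comp_hasDerivAt t (hcd t)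
    have h2 : P (deriv c t) = a t • qmul qj (y t) + b t • qmul qk (y t) := by
      rw [hode t, map_add, map_smul, map_smul, hPcomm qj (Or.inl rfl), hPcomm qk (Or.inr rfl)]
    rwa [h2] at h1
  -- set up the ODE uniqueness argument on [-(|v|+1), |v|+1]
  set lo : ℝ := -(|v| + 1) with hlo
  set hi : ℝ := |v| + 1 with hhi
  have habs : (0 : ℝ) ≤ |v| := abs_nonneg v
  have h0mem : (0 : ℝ) ∈ Set.Ioo lo hi := ⟨by rw [hlo]; linarith, by rw [hhi]; linarith⟩
  have hlohi : lo ≤ hi := by rw [hlo, hhi]; linarith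
  have hvmem : v ∈ Set.Icc lo hi := by
    constructor
    · rw [hlo]; have := neg_abs_le v; linarith
    · rw [hhi]; have := le_abs_self v; linarith
  -- bound on the coefficients
  obtain ⟨C, hC⟩ := (isCompact_Icc (a := lo) (b := hi)).exists_bound_of_continuousOn
    ((ha.continuousOn.abs).add (hb.continuousOn.abs))
  have hC' : ∀ t ∈ Set.Icc lo hi, |a t| + |b t| ≤ C := fun t htm =>
    le_trans (le_abs_self _) (by simpa [Real.norm_eq_abs] using hC t htm)
  have hC0 : (0 : ℝ) ≤ C :=
    le_trans (by positivity) (hC' 0 (Set.mem_Icc_of_Ioo h0mem))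
  -- clipped vector field
  set clip : ℝ → ℝ := fun t => max lo (min t hi) with hclip
  have hclip_mem : ∀ t, clip t ∈ Set.Icc lo hi :=
    fun t => ⟨le_max_left _ _, max_le hlohi (min_le_right _ _)⟩
  have hclip_eq : ∀ t ∈ Set.Icc lo hi, clip t = t := by
    intro t htm
    rw [hclip]
    simp only [min_eq_left htm.2, max_eq_right htm.1]
  set F : ℝ → H2 → H2 := fun t x => a (clip t) • qmul qj x + b (clip t) • qmul qk x with hF
  have hLip : ∀ t, LipschitzOnWith C.toNNReal (F t) Set.univ := by
    intro t
    apply LipschitzOnWith.of_dist_le_mul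
    intro x _ z _
    have key : F t x - F t z = a (clip t) • qmul qj (x - z) + b (clip t) • qmul qk (x - z) := by
      simp only [hF]
      rw [show x - z = x + (-z) from sub_eq_add_neg x z, qmul_add, qmul_add, qmul_neg, qmul_neg]
      module
    rw [dist_eq_norm, key]
    calc ‖a (clip t) • qmul qj (x - z) + b (clip t) • qmul qk (x - z)‖
        ≤ ‖a (clip t) • qmul qj (x - z)‖ + ‖b (clip t) • qmul qk (x - z)‖ := norm_add_le _ _
      _ = |a (clip t)| * ‖x - z‖ + |b (clip t)| * ‖x - z‖ := by
          rw [norm_smul, norm_smul, norm_qmul, norm_qmul, norm_qj, norm_qk,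
            Real.norm_eq_abs, Real.norm_eq_abs]; ring
      _ = (|a (clip t)| + |b (clip t)|) * ‖x - z‖ := by ring
      _ ≤ C * ‖x - z‖ :=
          mul_le_mul_of_nonneg_right (hC' _ (hclip_mem t)) (norm_nonneg _)
      _ = (C.toNNReal : ℝ) * dist x z := by
          rw [Real.coe_toNNReal C hC0, dist_eq_norm]
  have hF0 : ∀ t : ℝ, F t (0 : H2) = 0 := by
    intro t
    rw [hF]
    show a (clip t) • qmul qj (0 : H2) + b (clip t) • qmul qk (0 : H2) = 0
    rw [qmul_zero', qmul_zero', smul_zero, smul_zero, add_zero]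
  have hycont : ContinuousOn y (Set.Icc lo hi) :=
    (P.continuous.comp hc.continuous).continuousOn
  have hyde : ∀ t ∈ Set.Ioo lo hi, HasDerivAt y (F t (y t)) t := by
    intro t htm
    have : F t (y t) = a t • qmul qj (y t) + b t • qmul qk (y t) := by
      rw [hF]
      show a (clip t) • qmul qj (y t) + b (clip t) • qmul qk (y t)
          = a t • qmul qj (y t) + b t • qmul qk (y t)
      rw [hclip_eq t (Set.mem_Icc_of_Ioo htm)]
    rw [this]
    exact hyd t
  have hgde : ∀ t ∈ Set.Ioo lo hi, HasDerivAt (fun _ : ℝ => (0 : H2)) (F t (0 : H2)) t := by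
    intro t _
    rw [hF0 t]
    exact hasDerivAt_const t 0
  -- uniqueness: y agrees with the zero solution
  have hzero : Set.EqOn y (fun _ => (0 : H2)) (Set.Icc lo hi) :=
    ODE_solution_unique_of_mem_Icc (v := F) (s := fun _ => (Set.univ : Set H2))
      (K := C.toNNReal) (f := y) (g := fun _ => (0 : H2)) (t₀ := 0) (a := lo) (b := hi)
      (fun t _ => hLip t) h0mem hycont hyde (fun _ _ => trivial) continuousOn_const hgde
      (fun _ _ => trivial) hy0
  have hyv : y v = 0 := hzero hvmem
  -- conclude
  have hproj : T.orthogonalProjectionOnto (c v) = 0 := by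
    have h1 : (↑(T.orthogonalProjectionOnto (c v)) : H2) = 0 := hyv
    exact Subtype.ext h1
  have hcvT : c v ∈ Tᗮ := Submodule.orthogonalProjectionOnto_eq_zero_iff.mp hproj
  have hTT : Tᗮ = S := Submodule.orthogonal_orthogonal S
  rwa [hTT] at hcvT
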